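/- In the mixed game where firms A, B, C choose prices and firm D chooses its output, with c_A = c_B = c_C, the equilibrium outputs coincide with those of the all-prices (Bertrand) equilibrium: x_A = x_B = x_C = (3 b² c_D + b c_D + 4 b² c_A - 5 b c_A - 3 c_A - 7 a b² + 4 a b + 3 a) / (2 (1 - b)(b + 1)(7 b + 3)) and x_D = (3 a - 2 b² c_D - 7 b c_D - 3 c_D + 9 b² c_A + 3 b c_A - 7 a b² + 4 a b) / (2 (1 - b)(b + 1)(7 b + 3)). -/

import Mathlib

/-- Outputs of A, B, C and price of D as functions of `(pA, pB, pC, xD)`. -/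
noncomputable def xAmp (a b pA pB pC xD : ℝ) : ℝ :=
  ((1 - b)*a + b^2*xD - b*xD + b*pC + b*pB - b*pA - pA)/((1 - b)*(2*b + 1))
noncomputable def xBmp (a b pA pB pC xD : ℝ) : ℝ :=
  ((1 - b)*a + b^2*xD - b*xD + b*pC - b*pB - pB + b*pA)/((1 - b)*(2*b + 1))
noncomputable def xCmp (a b pA pB pC xD : ℝ) : ℝ :=
  ((1 - b)*a + b^2*xD - b*xD - b*pC - pC + b*pB + b*pA)/((1 - b)*(2*b + 1))
noncomputable def pDmp (a b pA pB pC xD : ℝ) : ℝ :=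
  ((1 - b)*a + 3*b^2*xD - 2*b*xD - xD + b*pC + b*pB + b*pA)/(2*b + 1)

noncomputable def piAmp (a b cA pA pB pC xD : ℝ) : ℝ := (pA - cA) * xAmp a b pA pB pC xD
noncomputable def piBmp (a b cB pA pB pC xD : ℝ) : ℝ := (pB - cB) * xBmp a b pA pB pC xD
noncomputable def piCmp (a b cC pA pB pC xD : ℝ) : ℝ := (pC - cC) * xCmp a b pA pB pC xD
noncomputable def piDmp (a b cD pA pB pC xD : ℝ) : ℝ := (pDmp a b pA pB pC xD - cD) * xD

noncomputable def phiAmp (a b cA cB cC cD pA pB pC xD : ℝ) : ℝ :=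
  piAmp a b cA pA pB pC xD -
    (piBmp a b cB pA pB pC xD + piCmp a b cC pA pB pC xD + piDmp a b cD pA pB pC xD)/3
noncomputable def phiBmp (a b cA cB cC cD pA pB pC xD : ℝ) : ℝ :=
  piBmp a b cB pA pB pC xD -
    (piAmp a b cA pA pB pC xD + piCmp a b cC pA pB pC xD + piDmp a b cD pA pB pC xD)/3
noncomputable def phiCmp (a b cA cB cC cD pA pB pC xD : ℝ) : ℝ :=
  piCmp a b cC pA pB pC xD -
    (piAmp a b cA pA pB pC xD + piBmp a b cB pA pB pC xD + piDmp a b cD pA pB pC xD)/3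
noncomputable def phiDmp (a b cA cB cC cD pA pB pC xD : ℝ) : ℝ :=
  piDmp a b cD pA pB pC xD -
    (piAmp a b cA pA pB pC xD + piBmp a b cB pA pB pC xD + piCmp a b cC pA pB pC xD)/3

/-! Each relative profit is a quadratic in the firm's own strategic variable, so the four
first-order conditions are linear equations. Subtracting those of two price-setters with equal
costs gives `(6 + 8b)(p_B - p_A) = 0`, so prices are symmetric; the remaining 2 × 2 system in
`(p_A, x_D)` has determinant `12 (1 - b)(1 + b)(7b + 3) ≠ 0`. -/

lemma deriv_eq_of_forall_eq_quadratic {f : ℝ → ℝ} {α β γ K : ℝ}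
    (hf : ∀ x, f x = (α * x ^ 2 + β * x) / K + γ) (x : ℝ) :
    deriv f x = (2 * α * x + β) / K := by
  rw [show f = _ from funext hf]
  exact (((((hasDerivAt_pow 2 x).const_mul α).add ((hasDerivAt_id' x).const_mul β)).div_const K
    |>.add_const γ).congr_deriv (by ring)).deriv

section FirstOrderConditions

variable {a b cA cB cC cD pA pB pC xD : ℝ}

lemma deriv_phiAmp_eq_zero_iff (h1 : 1 - b ≠ 0) (h2 : 2 * b + 1 ≠ 0) :
    deriv (fun p => phiAmp a b cA cB cC cD p pB pC xD) pA = 0 ↔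
      3*a*(1 - b) - 6*(1 + b)*pA + 2*b*(pB + pC) - 4*b*(1 - b)*xD
        + 3*(1 + b)*cA + b*(cB + cC) = 0 := by
  rw [deriv_eq_of_forall_eq_quadratic (α := -3*(1 + b))
    (β := 3*a*(1 - b) + 2*b*(pB + pC) - 4*b*(1 - b)*xD + 3*(1 + b)*cA + b*(cB + cC))
    (K := 3*((1 - b)*(2*b + 1))) (γ := phiAmp a b cA cB cC cD 0 pB pC xD) fun p => by
      simp only [phiAmp, piAmp, piBmp, piCmp, piDmp, xAmp, xBmp, xCmp, pDmp]
      field_simp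
      ring,
    div_eq_zero_iff, or_iff_left (by simp [h1, h2])]
  constructor <;> intro h <;> linarith

lemma deriv_phiBmp_eq_zero_iff (h1 : 1 - b ≠ 0) (h2 : 2 * b + 1 ≠ 0) :
    deriv (fun p => phiBmp a b cA cB cC cD pA p pC xD) pB = 0 ↔
      3*a*(1 - b) - 6*(1 + b)*pB + 2*b*(pA + pC) - 4*b*(1 - b)*xD
        + 3*(1 + b)*cB + b*(cA + cC) = 0 := by
  rw [deriv_eq_of_forall_eq_quadratic (α := -3*(1 + b))
    (β := 3*a*(1 - b) + 2*b*(pA + pC) - 4*b*(1 - b)*xD + 3*(1 + b)*cB + b*(cA + cC))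
    (K := 3*((1 - b)*(2*b + 1))) (γ := phiBmp a b cA cB cC cD pA 0 pC xD) fun p => by
      simp only [phiBmp, piAmp, piBmp, piCmp, piDmp, xAmp, xBmp, xCmp, pDmp]
      field_simp
      ring,
    div_eq_zero_iff, or_iff_left (by simp [h1, h2])]
  constructor <;> intro h <;> linarith

lemma deriv_phiCmp_eq_zero_iff (h1 : 1 - b ≠ 0) (h2 : 2 * b + 1 ≠ 0) :
    deriv (fun p => phiCmp a b cA cB cC cD pA pB p xD) pC = 0 ↔
      3*a*(1 - b) - 6*(1 + b)*pC + 2*b*(pA + pB) - 4*b*(1 - b)*xD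
        + 3*(1 + b)*cC + b*(cA + cB) = 0 := by
  rw [deriv_eq_of_forall_eq_quadratic (α := -3*(1 + b))
    (β := 3*a*(1 - b) + 2*b*(pA + pB) - 4*b*(1 - b)*xD + 3*(1 + b)*cC + b*(cA + cB))
    (K := 3*((1 - b)*(2*b + 1))) (γ := phiCmp a b cA cB cC cD pA pB 0 xD) fun p => by
      simp only [phiCmp, piAmp, piBmp, piCmp, piDmp, xAmp, xBmp, xCmp, pDmp]
      field_simp
      ring,
    div_eq_zero_iff, or_iff_left (by simp [h1, h2])]
  constructor <;> intro h <;> linarith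

lemma deriv_phiDmp_eq_zero_iff (h1 : 1 - b ≠ 0) (h2 : 2 * b + 1 ≠ 0) :
    deriv (fun x => phiDmp a b cA cB cC cD pA pB pC x) xD = 0 ↔
      3*a*(1 - b) - 6*(1 - b)*(1 + 3*b)*xD + 4*b*(pA + pB + pC)
        - 3*(1 + 2*b)*cD - b*(cA + cB + cC) = 0 := by
  rw [deriv_eq_of_forall_eq_quadratic (α := -3*(1 - b)*(1 + 3*b))
    (β := 3*a*(1 - b) + 4*b*(pA + pB + pC) - 3*(1 + 2*b)*cD - b*(cA + cB + cC))
    (K := 3*(2*b + 1)) (γ := phiDmp a b cA cB cC cD pA pB pC 0) fun x => by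
      -- the form in which `field_simp` meets this denominator
      have h2' : b * 2 + 1 ≠ 0 := by rwa [mul_comm] at h2
      simp only [phiDmp, piAmp, piBmp, piCmp, piDmp, xAmp, xBmp, xCmp, pDmp]
      field_simp
      ring,
    div_eq_zero_iff, or_iff_left (by simp [h2])]
  constructor <;> intro h <;> linarith

end FirstOrderConditions

lemma xAmp_of_eq_prices {a b p x : ℝ} (h1 : 1 - b ≠ 0) :
    xAmp a b p p p x = (a - b*x - p) / (2*b + 1) := by
  rw [xAmp]
  field_simp
  ring

/-- Mixed game (A, B, C choose prices, D chooses its output): the equilibrium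
outputs coincide with the Bertrand ones. -/
theorem mixed_price_quantity_equilibrium (a b cA cB cC cD pA pB pC xD : ℝ)
    (hb0 : 0 < b) (hb1 : b < 1) (hcB : cB = cA) (hcC : cC = cA)
    (hA : deriv (fun p => phiAmp a b cA cB cC cD p pB pC xD) pA = 0)
    (hB : deriv (fun p => phiBmp a b cA cB cC cD pA p pC xD) pB = 0)
    (hC : deriv (fun p => phiCmp a b cA cB cC cD pA pB p xD) pC = 0)
    (hD : deriv (fun x => phiDmp a b cA cB cC cD pA pB pC x) xD = 0) :
    xAmp a b pA pB pC xD =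
      (3*b^2*cD + b*cD + 4*b^2*cA - 5*b*cA - 3*cA - 7*a*b^2 + 4*a*b + 3*a) /
        (2*(1 - b)*(b + 1)*(7*b + 3)) ∧
    xBmp a b pA pB pC xD =
      (3*b^2*cD + b*cD + 4*b^2*cA - 5*b*cA - 3*cA - 7*a*b^2 + 4*a*b + 3*a) /
        (2*(1 - b)*(b + 1)*(7*b + 3)) ∧
    xCmp a b pA pB pC xD =
      (3*b^2*cD + b*cD + 4*b^2*cA - 5*b*cA - 3*cA - 7*a*b^2 + 4*a*b + 3*a) /
        (2*(1 - b)*(b + 1)*(7*b + 3)) ∧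
    xD = (3*a - 2*b^2*cD - 7*b*cD - 3*cD + 9*b^2*cA + 3*b*cA - 7*a*b^2 + 4*a*b) /
        (2*(1 - b)*(b + 1)*(7*b + 3)) := by
  have h1 : 1 - b ≠ 0 := (sub_pos.2 hb1).ne'
  have h2 : 2 * b + 1 ≠ 0 := by linarith
  have hden : 2*(1 - b)*(b + 1)*(7*b + 3) ≠ 0 := by
    have : 0 < b + 1 := by linarith
    have : 0 < 7 * b + 3 := by linarith
    have : 0 < 1 - b := sub_pos.2 hb1
    positivity
  rw [deriv_phiAmp_eq_zero_iff h1 h2] at hA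
  rw [deriv_phiBmp_eq_zero_iff h1 h2] at hB
  rw [deriv_phiCmp_eq_zero_iff h1 h2] at hC
  rw [deriv_phiDmp_eq_zero_iff h1 h2] at hD
  subst cB cC
  have h68 : 6 + 8*b ≠ 0 := by linarith
  have hpB : pB = pA := mul_left_cancel₀ h68 (by linear_combination hA - hB)
  have hpC : pC = pA := mul_left_cancel₀ h68 (by linear_combination hA - hC)
  subst pB pC
  have hxB : xBmp a b pA pA pA xD = xAmp a b pA pA pA xD := by rw [xAmp, xBmp]; ring
  have hxC : xCmp a b pA pA pA xD = xAmp a b pA pA pA xD := by rw [xAmp, xCmp]; ring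
  rw [hxB, hxC, and_self_left, and_self_left]
  constructor
  · rw [xAmp_of_eq_prices h1, div_eq_div_iff h2 hden]
    linear_combination (1 + 2*b - b^2)*hA + (b*(1 + 3*b)/3)*hD
  · rw [eq_div_iff hden]
    linear_combination (-2*b)*hA - ((3 + b)/3)*hD
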